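/- Let R be a rooted binary phylogenetic network on X. If there exists a tree-child cherry-picking sequence associated with a complete cherry-reduction sequence for R, then R is tree-child. -/

import Mathlib

/-!  Formalisation preliminaries for rooted and unrooted binary phylogenetic
networks, cherry reductions, cherry-reduction sequences and cherry-picking
sequences, following Döcker & Linz. -/

/-- A finite directed graph whose vertices are natural numbers. -/
structure DNet where
  verts : Finset ℕ
  arcs : Finset (ℕ × ℕ)

namespace DNet

/-- in-degree of a vertex -/
def inDeg (N : DNet) (v : ℕ) : ℕ := (N.arcs.filter (fun p => p.2 = v)).card

/-- out-degree of a vertex -/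
def outDeg (N : DNet) (v : ℕ) : ℕ := (N.arcs.filter (fun p => p.1 = v)).card

/-- the arc relation -/
def Arc (N : DNet) (u v : ℕ) : Prop := (u, v) ∈ N.arcs

/-- the digraph has no directed cycle -/
def Acyclic (N : DNet) : Prop := ∀ v, ¬ Relation.TransGen N.Arc v v

/-- root: in-degree 0 and out-degree 2 -/
def IsRoot (N : DNet) (v : ℕ) : Prop := v ∈ N.verts ∧ N.inDeg v = 0 ∧ N.outDeg v = 2

/-- leaf: in-degree 1 and out-degree 0 -/
def IsLeaf (N : DNet) (v : ℕ) : Prop := v ∈ N.verts ∧ N.inDeg v = 1 ∧ N.outDeg v = 0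

/-- tree vertex: in-degree 1 and out-degree 2 -/
def IsTreeVertex (N : DNet) (v : ℕ) : Prop := v ∈ N.verts ∧ N.inDeg v = 1 ∧ N.outDeg v = 2

/-- reticulation: in-degree 2 and out-degree 1 -/
def IsRet (N : DNet) (v : ℕ) : Prop := v ∈ N.verts ∧ N.inDeg v = 2 ∧ N.outDeg v = 1

/-- the network consists of a single vertex -/
def SingleVertex (N : DNet) : Prop := N.verts.card = 1 ∧ N.arcs = ∅

/-- the reticulation number of a rooted network: number of in-degree-2 vertices -/
def retNum (N : DNet) : ℕ := (N.verts.filter (fun v => N.inDeg v = 2)).card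

/-- tree-child: every vertex with a child has a child that is a tree vertex or a leaf -/
def TreeChild (N : DNet) : Prop :=
  ∀ v ∈ N.verts, N.outDeg v ≠ 0 → ∃ c, (v, c) ∈ N.arcs ∧ (N.IsTreeVertex c ∨ N.IsLeaf c)

/-- a stack: two reticulations joined by an arc -/
def HasStack (N : DNet) : Prop := ∃ u v, N.IsRet u ∧ N.IsRet v ∧ (u, v) ∈ N.arcs

/-- a pair of sibling reticulations: two reticulations with a common parent -/
def HasSiblingRets (N : DNet) : Prop :=
  ∃ p u v, u ≠ v ∧ N.IsRet u ∧ N.IsRet v ∧ (p, u) ∈ N.arcs ∧ (p, v) ∈ N.arcs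

/-- stack-free -/
def StackFree (N : DNet) : Prop := ¬ N.HasStack

end DNet

/-- `N` is a rooted binary phylogenetic network with leaf set `X`
(including the degenerate single-vertex network when `|X| = 1`). -/
def IsRootedBinaryNet (N : DNet) (X : Finset ℕ) : Prop :=
  (∃ x, X = {x} ∧ N.verts = {x} ∧ N.arcs = ∅) ∨
  ((∀ p ∈ N.arcs, p.1 ∈ N.verts ∧ p.2 ∈ N.verts) ∧
   (∀ p ∈ N.arcs, p.1 ≠ p.2) ∧
   N.Acyclic ∧
   (∃! ρ, ρ ∈ N.verts ∧ N.inDeg ρ = 0) ∧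
   (∀ v ∈ N.verts, N.IsRoot v ∨ N.IsLeaf v ∨ N.IsTreeVertex v ∨ N.IsRet v) ∧
   (∀ v, N.IsLeaf v ↔ v ∈ X))

/-- `[a,b]` is a cherry of the rooted network `N` (with `a` the leaf to be deleted). -/
def RCherry (N : DNet) (a b : ℕ) : Prop :=
  a ≠ b ∧ N.IsLeaf a ∧ N.IsLeaf b ∧ ∃ p, (p, a) ∈ N.arcs ∧ (p, b) ∈ N.arcs

/-- `(a,b)` is a reticulated cherry of the rooted network `N` with reticulation leaf `a`:
the parent of `a` is a reticulation and receives an arc from the parent of `b`. -/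
def RRetCherry (N : DNet) (a b : ℕ) : Prop :=
  a ≠ b ∧ N.IsLeaf a ∧ N.IsLeaf b ∧
  ∃ pa pb, (pa, a) ∈ N.arcs ∧ (pb, b) ∈ N.arcs ∧ N.IsRet pa ∧ (pb, pa) ∈ N.arcs

/-- `M` is obtained from the rooted network `N` by reducing the cherry `[a,b]`:
delete `a` and suppress (or, if it is the root, delete) the resulting degree-2 vertex. -/
def RReduceCherry (N M : DNet) (a b : ℕ) : Prop :=
  RCherry N a b ∧
  ∃ p, (p, a) ∈ N.arcs ∧ (p, b) ∈ N.arcs ∧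
    ((N.inDeg p = 0 ∧ M.verts = N.verts \ {a, p} ∧ M.arcs = N.arcs \ {(p, a), (p, b)}) ∨
     (∃ g, (g, p) ∈ N.arcs ∧ M.verts = N.verts \ {a, p} ∧
        M.arcs = insert (g, b) (N.arcs \ {(g, p), (p, a), (p, b)})))

/-- `M` is obtained from the rooted network `N` by reducing the reticulated cherry `(a,b)`
with reticulation leaf `a`: delete the reticulation arc `(p_b, p_a)` and suppress the two
resulting degree-2 vertices. -/
def RReduceRetCherry (N M : DNet) (a b : ℕ) : Prop :=
  RRetCherry N a b ∧
  ∃ pa pb qa qb, (pa, a) ∈ N.arcs ∧ (pb, b) ∈ N.arcs ∧ N.IsRet pa ∧ (pb, pa) ∈ N.arcs ∧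
    (qa, pa) ∈ N.arcs ∧ qa ≠ pb ∧ (qb, pb) ∈ N.arcs ∧
    M.verts = N.verts \ {pa, pb} ∧
    M.arcs = insert (qa, a) (insert (qb, b)
      (N.arcs \ {(pb, pa), (pa, a), (qa, pa), (pb, b), (qb, pb)}))

/-- A recorded reduction: either a cherry pair `[x,y]` or a reticulated-cherry pair `(x,y)`
(the deleted leaf, resp. the reticulation leaf, is listed first). -/
inductive Pick where
  | cherry (x y : ℕ)
  | ret (x y : ℕ)
deriving DecidableEq

namespace Pick

/-- first coordinate -/
def fst : Pick → ℕ
  | cherry x _ => x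
  | ret x _ => x

/-- second coordinate -/
def snd : Pick → ℕ
  | cherry _ y => y
  | ret _ y => y

/-- the pair contains the element `z` -/
def Contains (r : Pick) (z : ℕ) : Prop := r.fst = z ∨ r.snd = z

/-- the pair is a reticulated-cherry pair -/
def IsRetPair : Pick → Prop
  | cherry _ _ => False
  | ret _ _ => True

/-- the pair is a cherry pair -/
def IsCherryPair : Pick → Prop
  | cherry _ _ => True
  | ret _ _ => False

end Pick

/-- The step from `N` to `M` is the cherry reduction recorded by the pick `r`
(rooted version). -/
def RStep (N M : DNet) : Pick → Prop
  | .cherry x y => RReduceCherry N M x y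
  | .ret x y => RReduceRetCherry N M x y

/-- `(Ns 0, …, Ns k)` is a cherry-reduction sequence of rooted networks whose associated
cherry-picking sequence is `(rs 0, …, rs (k-1))`. -/
def RCherrySeq (Ns : ℕ → DNet) (rs : ℕ → Pick) (k : ℕ) : Prop :=
  ∀ i < k, RStep (Ns i) (Ns (i + 1)) (rs i)

/-- `(Ns 0, …, Ns k)` is a cherry-reduction sequence of rooted networks. -/
def RReductionSeq (Ns : ℕ → DNet) (k : ℕ) : Prop :=
  ∀ i < k, ∃ r, RStep (Ns i) (Ns (i + 1)) r

/-- `R` is a rooted orchard network: it admits a complete cherry-reduction sequence. -/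
def Orchard (R : DNet) : Prop :=
  ∃ Ns k, Ns 0 = R ∧ RReductionSeq Ns k ∧ (Ns k).SingleVertex

/-- `j = s(i)`: the smallest index `j > i` (within the sequence of length `k`) such that
`rs j` contains the first coordinate of `rs i`. -/
def SuccAt (rs : ℕ → Pick) (k i j : ℕ) : Prop :=
  i < j ∧ j < k ∧ (rs j).Contains (rs i).fst ∧
  ∀ l, i < l → l < j → ¬ (rs l).Contains (rs i).fst

/-- Property (P1): the successor pair of every reticulated-cherry pair, if it exists,
is a cherry pair. -/
def SeqP1 (rs : ℕ → Pick) (k : ℕ) : Prop :=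
  ∀ i j, (rs i).IsRetPair → SuccAt rs k i j → (rs j).IsCherryPair

/-- Property (P2): no element of the sequence is the successor pair of two distinct
reticulated-cherry pairs. -/
def SeqP2 (rs : ℕ → Pick) (k : ℕ) : Prop :=
  ∀ i i' j, i ≠ i' → (rs i).IsRetPair → (rs i').IsRetPair →
    SuccAt rs k i j → SuccAt rs k i' j → False

/-- A tree-child cherry-picking sequence: one satisfying (P1) and (P2). -/
def TreeChildSeq (rs : ℕ → Pick) (k : ℕ) : Prop := SeqP1 rs k ∧ SeqP2 rs k

/-- Property (P3): the first coordinate of each pair does not occur as the second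
coordinate of any later pair. -/
def SeqP3 (rs : ℕ → Pick) (k : ℕ) : Prop :=
  ∀ i j, i < j → j < k → (rs i).fst ≠ (rs j).snd

/-- A finite undirected graph whose vertices are natural numbers. -/
structure UNet where
  verts : Finset ℕ
  edges : Finset (Sym2 ℕ)

namespace UNet

/-- degree of a vertex -/
def deg (U : UNet) (v : ℕ) : ℕ := (U.edges.filter (fun e => v ∈ e)).card

/-- adjacency -/
def Adj (U : UNet) (u v : ℕ) : Prop := u ≠ v ∧ s(u, v) ∈ U.edges

/-- connectedness -/
def Connected (U : UNet) : Prop :=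
  ∀ u ∈ U.verts, ∀ v ∈ U.verts, Relation.ReflTransGen U.Adj u v

/-- leaf: degree-1 vertex -/
def IsLeaf (U : UNet) (v : ℕ) : Prop := v ∈ U.verts ∧ U.deg v = 1

/-- the network consists of a single vertex -/
def SingleVertex (U : UNet) : Prop := U.verts.card = 1 ∧ U.edges = ∅

/-- the reticulation number of an unrooted network: `|E| - (|V| - 1)` -/
def retNum (U : UNet) : ℕ := U.edges.card - (U.verts.card - 1)

end UNet

/-- `U` is an unrooted binary phylogenetic network with leaf set `X`
(including the degenerate single-vertex network when `|X| = 1`). -/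
def IsUnrootedBinaryNet (U : UNet) (X : Finset ℕ) : Prop :=
  (∃ x, X = {x} ∧ U.verts = {x} ∧ U.edges = ∅) ∨
  ((∀ e ∈ U.edges, ¬ e.IsDiag ∧ ∀ v ∈ e, v ∈ U.verts) ∧
   U.Connected ∧
   (∀ v ∈ U.verts, U.deg v = 1 ∨ U.deg v = 3) ∧
   (∀ v, U.IsLeaf v ↔ v ∈ X))

/-- `[a,b]` is a cherry of the unrooted network `U`. -/
def UCherry (U : UNet) (a b : ℕ) : Prop :=
  a ≠ b ∧ U.IsLeaf a ∧ U.IsLeaf b ∧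
  ((∃ p, s(a, p) ∈ U.edges ∧ s(b, p) ∈ U.edges ∧ p ≠ a ∧ p ≠ b) ∨ U.edges = {s(a, b)})

/-- the edge `{u,v}` lies on a cycle of `U` -/
def UOnCycle (U : UNet) (u v : ℕ) : Prop :=
  s(u, v) ∈ U.edges ∧
  Relation.ReflTransGen (fun x y => x ≠ y ∧ s(x, y) ∈ U.edges ∧ s(x, y) ≠ s(u, v)) u v

/-- `(a,b)` is a reticulated cherry of the unrooted network `U` with reticulation
edge `{u,v}`. -/
def URetCherry (U : UNet) (a b : ℕ) : Prop :=
  a ≠ b ∧ U.IsLeaf a ∧ U.IsLeaf b ∧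
  ∃ u v, s(a, u) ∈ U.edges ∧ s(u, v) ∈ U.edges ∧ s(v, b) ∈ U.edges ∧
    u ≠ v ∧ u ≠ a ∧ v ≠ b ∧ UOnCycle U u v

/-- `W` is obtained from `U` by reducing the cherry `[a,b]`: delete `a` and, if `U` has
at least two edges, suppress the resulting degree-2 vertex. -/
def UReduceCherry (U W : UNet) (a b : ℕ) : Prop :=
  UCherry U a b ∧
  ((U.edges = {s(a, b)} ∧ W.verts = U.verts \ {a} ∧ W.edges = ∅) ∨
   (∃ p g, s(a, p) ∈ U.edges ∧ s(b, p) ∈ U.edges ∧ s(p, g) ∈ U.edges ∧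
      p ≠ a ∧ p ≠ b ∧ g ≠ a ∧ g ≠ b ∧ g ≠ p ∧
      W.verts = U.verts \ {a, p} ∧
      W.edges = insert s(b, g) (U.edges \ {s(a, p), s(b, p), s(p, g)})))

/-- `W` is obtained from `U` by reducing the reticulated cherry `(a,b)`: delete the
reticulation edge `{u,v}` and suppress the two resulting degree-2 vertices. -/
def UReduceRetCherry (U W : UNet) (a b : ℕ) : Prop :=
  URetCherry U a b ∧
  ∃ u v ga gb, s(a, u) ∈ U.edges ∧ s(u, v) ∈ U.edges ∧ s(v, b) ∈ U.edges ∧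
    u ≠ v ∧ u ≠ a ∧ v ≠ b ∧ UOnCycle U u v ∧
    s(u, ga) ∈ U.edges ∧ ga ≠ a ∧ ga ≠ v ∧ ga ≠ u ∧
    s(v, gb) ∈ U.edges ∧ gb ≠ b ∧ gb ≠ u ∧ gb ≠ v ∧
    W.verts = U.verts \ {u, v} ∧
    W.edges = insert s(a, ga) (insert s(b, gb)
      (U.edges \ {s(u, v), s(a, u), s(u, ga), s(v, b), s(v, gb)}))

/-- The step from `U` to `W` is the cherry reduction recorded by the pick `r`
(unrooted version). -/
def UStep (U W : UNet) : Pick → Prop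
  | .cherry x y => UReduceCherry U W x y
  | .ret x y => UReduceRetCherry U W x y

/-- `(Us 0, …, Us k)` is a cherry-reduction sequence of unrooted networks whose associated
cherry-picking sequence is `(rs 0, …, rs (k-1))`. -/
def UCherrySeq (Us : ℕ → UNet) (rs : ℕ → Pick) (k : ℕ) : Prop :=
  ∀ i < k, UStep (Us i) (Us (i + 1)) (rs i)

/-- `(Us 0, …, Us k)` is a cherry-reduction sequence of unrooted networks. -/
def UReductionSeq (Us : ℕ → UNet) (k : ℕ) : Prop :=
  ∀ i < k, ∃ r, UStep (Us i) (Us (i + 1)) r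

/-- The rooted network `R` is an orientation of the unrooted network `U`: `U` is obtained
from `R` by forgetting arc directions and suppressing the root. -/
def IsOrientationOf (R : DNet) (U : UNet) : Prop :=
  (R.arcs = ∅ ∧ U.edges = ∅ ∧ U.verts = R.verts) ∨
  (∃ ρ c₁ c₂, ρ ∈ R.verts ∧ R.inDeg ρ = 0 ∧ c₁ ≠ c₂ ∧
    (ρ, c₁) ∈ R.arcs ∧ (ρ, c₂) ∈ R.arcs ∧
    U.verts = R.verts.erase ρ ∧
    U.edges = insert s(c₁, c₂)
      ((R.arcs.filter (fun p => p.1 ≠ ρ)).image (fun p => s(p.1, p.2))))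

/-- `U` is an unrooted tree-child network on `X`: it has a tree-child orientation. -/
def UnrootedTreeChild (U : UNet) (X : Finset ℕ) : Prop :=
  ∃ R : DNet, IsRootedBinaryNet R X ∧ R.TreeChild ∧ IsOrientationOf R U

/-- The pick `r` is one of the picks associated with the recorded reduction `p`:
it must agree with `p` on cherry reductions, and may swap the two coordinates of a
reticulated-cherry reduction. -/
def PickAssoc : Pick → Pick → Prop
  | .cherry x y, r => r = .cherry x y
  | .ret x y, r => r = .ret x y ∨ r = .ret y x

/-- `X`-labelled isomorphism of unrooted networks. -/
def UIso (X : Finset ℕ) (U W : UNet) : Prop :=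
  ∃ f : ℕ → ℕ, Set.BijOn f ↑U.verts ↑W.verts ∧ (∀ x ∈ X, f x = x) ∧
    W.edges = U.edges.image (Sym2.map f)


/-!
Induct along the reduction sequence, from its end back to `Ns 0`. Every reduction deletes a set
`D` of vertices (the picked leaf and its parent, or the two parents of a reticulated cherry) and
redirects the arcs entering `D`. Undoing a cherry reduction keeps a tree-child network
tree-child. Undoing the reduction of a reticulated cherry `(a, b)` subdivides the arcs above `a`
and `b` and joins the two new vertices by an arc; the result is tree-child when the reduced
network is and `a` has neither a reticulation parent nor a reticulation sibling there. So the
induction carries a set `S` of such "clear" leaves, pairwise non-siblings, since undoing the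
reduction of `(a, b)` gives every sibling of `a` a reticulation sibling. A leaf may join `S` when
its next pick is a cherry pair that is not the successor pair of a reticulated-cherry pair and not
the next pick of another member of `S`; by (P1) and (P2) this holds for the reticulation leaf of
every reticulated-cherry pair.
-/

namespace DNet

variable {N M : DNet} {D S : Finset ℕ} {σ : ℕ → ℕ} {a b p pa pb q qa u v w x y : ℕ}

lemma one_le_outDeg_of_mem (h : (u, v) ∈ N.arcs) : 1 ≤ N.outDeg u :=
  Finset.card_pos.2 ⟨_, Finset.mem_filter.2 ⟨h, rfl⟩⟩

lemma one_le_inDeg_of_mem (h : (u, v) ∈ N.arcs) : 1 ≤ N.inDeg v :=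
  Finset.card_pos.2 ⟨_, Finset.mem_filter.2 ⟨h, rfl⟩⟩

lemma ne_of_mem_arcs_of_outDeg_eq_zero (h : (u, v) ∈ N.arcs) (hx : N.outDeg x = 0) :
    u ≠ x := by
  rintro rfl
  have := one_le_outDeg_of_mem h
  omega

lemma two_le_outDeg (hv : (u, v) ∈ N.arcs) (hw : (u, w) ∈ N.arcs) (hvw : v ≠ w) :
    2 ≤ N.outDeg u :=
  Finset.one_lt_card.2
    ⟨_, Finset.mem_filter.2 ⟨hv, rfl⟩, _, Finset.mem_filter.2 ⟨hw, rfl⟩, by simp [hvw]⟩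

lemma eq_of_outDeg_eq_one (hd : N.outDeg u = 1) (hv : (u, v) ∈ N.arcs)
    (hw : (u, w) ∈ N.arcs) : w = v := by
  simpa using Finset.card_le_one.1 hd.le _ (Finset.mem_filter.2 ⟨hw, rfl⟩) _
    (Finset.mem_filter.2 ⟨hv, rfl⟩)

lemma eq_of_inDeg_eq_one (hd : N.inDeg w = 1) (hu : (u, w) ∈ N.arcs)
    (hv : (v, w) ∈ N.arcs) : v = u := by
  simpa using Finset.card_le_one.1 hd.le _ (Finset.mem_filter.2 ⟨hv, rfl⟩) _
    (Finset.mem_filter.2 ⟨hu, rfl⟩)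

lemma eq_or_eq_of_outDeg_eq_two (hd : N.outDeg u = 2) (hv : (u, v) ∈ N.arcs)
    (hw : (u, w) ∈ N.arcs) (hvw : v ≠ w) (hx : (u, x) ∈ N.arcs) : x = v ∨ x = w := by
  by_contra! hne
  have : 2 < N.outDeg u := Finset.two_lt_card.2
    ⟨_, Finset.mem_filter.2 ⟨hv, rfl⟩, _, Finset.mem_filter.2 ⟨hw, rfl⟩, _,
      Finset.mem_filter.2 ⟨hx, rfl⟩, by simp [hvw], by simp [Ne.symm hne.1],
      by simp [Ne.symm hne.2]⟩
  omega

lemma eq_or_eq_of_inDeg_eq_two (hd : N.inDeg x = 2) (hu : (u, x) ∈ N.arcs)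
    (hv : (v, x) ∈ N.arcs) (huv : u ≠ v) (hw : (w, x) ∈ N.arcs) : w = u ∨ w = v := by
  by_contra! hne
  have : 2 < N.inDeg x := Finset.two_lt_card.2
    ⟨_, Finset.mem_filter.2 ⟨hu, rfl⟩, _, Finset.mem_filter.2 ⟨hv, rfl⟩, _,
      Finset.mem_filter.2 ⟨hw, rfl⟩, by simp [huv], by simp [Ne.symm hne.1],
      by simp [Ne.symm hne.2]⟩
  omega

lemma exists_ne_of_outDeg_eq_two (hd : N.outDeg u = 2) (v : ℕ) :
    ∃ w, w ≠ v ∧ (u, w) ∈ N.arcs := by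
  obtain ⟨⟨u', w⟩, hw, hne⟩ := Finset.exists_mem_ne (s := N.arcs.filter (·.1 = u))
    (by unfold outDeg at hd; omega) (u, v)
  obtain ⟨hw', rfl⟩ := Finset.mem_filter.1 hw
  exact ⟨w, by simpa using hne, hw'⟩

lemma inDeg_eq_of_parents_iff (h : ∀ u, (u, v) ∈ M.arcs ↔ (u, w) ∈ N.arcs) :
    M.inDeg v = N.inDeg w := by
  refine Finset.card_bij (fun e _ => (e.1, w)) ?_ ?_ ?_ <;> simp only [Finset.mem_filter]
  · rintro ⟨u, _⟩ ⟨he, rfl⟩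
    exact ⟨(h u).1 he, trivial⟩
  · rintro ⟨u, _⟩ ⟨-, rfl⟩ ⟨u', _⟩ ⟨-, rfl⟩ he
    simpa using he
  · rintro ⟨u, _⟩ ⟨he, rfl⟩
    exact ⟨(u, v), ⟨(h u).2 he, rfl⟩, rfl⟩

lemma inDeg_eq_one_of_parents_iff (h : ∀ u, (u, v) ∈ N.arcs ↔ u = q) : N.inDeg v = 1 := by
  rw [inDeg, Finset.card_eq_one]
  refine ⟨(q, v), Finset.ext fun ⟨u, w⟩ => ?_⟩
  simp only [Finset.mem_filter, Finset.mem_singleton, Prod.mk.injEq]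
  constructor
  · rintro ⟨hu, rfl⟩
    exact ⟨(h u).1 hu, rfl⟩
  · rintro ⟨rfl, rfl⟩
    exact ⟨(h u).2 rfl, rfl⟩

lemma outDeg_eq_of_children_iff
    (hσ : ∀ w w', (u, w) ∈ N.arcs → (u, w') ∈ N.arcs → σ w = σ w' → w = w')
    (h : ∀ w, (u, w) ∈ M.arcs ↔ ∃ w', (u, w') ∈ N.arcs ∧ σ w' = w) :
    M.outDeg u = N.outDeg u := by
  symm
  refine Finset.card_bij (fun e _ => (u, σ e.2)) ?_ ?_ ?_ <;> simp only [Finset.mem_filter]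
  · rintro ⟨_, w⟩ ⟨he, rfl⟩
    exact ⟨(h _).2 ⟨w, he, rfl⟩, trivial⟩
  · rintro ⟨_, w⟩ ⟨hw, rfl⟩ ⟨_, w'⟩ ⟨hw', rfl⟩ he
    simpa using hσ w w' hw hw' (by simpa using he)
  · rintro ⟨_, w⟩ ⟨he, rfl⟩
    obtain ⟨w', hw', rfl⟩ := (h w).1 he
    exact ⟨(_, w'), ⟨hw', rfl⟩, rfl⟩

/-- The degree conditions of a binary network with isolated vertices allowed: unlike
`IsRootedBinaryNet`, this survives cherry reductions. -/
def HasBinaryDegrees (N : DNet) : Prop :=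
  (∀ e ∈ N.arcs, e.1 ∈ N.verts ∧ e.2 ∈ N.verts) ∧
  ∀ v ∈ N.verts, N.inDeg v = 0 ∧ N.outDeg v = 2 ∨ N.inDeg v = 1 ∧ N.outDeg v = 0 ∨
    N.inDeg v = 1 ∧ N.outDeg v = 2 ∨ N.inDeg v = 2 ∧ N.outDeg v = 1 ∨
    N.inDeg v = 0 ∧ N.outDeg v = 0

lemma hasBinaryDegrees_of_isRootedBinaryNet {X : Finset ℕ} (h : IsRootedBinaryNet N X) :
    N.HasBinaryDegrees := by
  rcases h with ⟨x, -, hv, ha⟩ | ⟨hmem, -, -, -, hdeg, -⟩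
  · refine ⟨by simp [ha], fun v _ => ?_⟩
    simp [inDeg, outDeg, ha]
  · refine ⟨hmem, fun v hv => ?_⟩
    rcases hdeg v hv with h | h | h | h <;> simp [h.2]

namespace HasBinaryDegrees

lemma source_mem (hN : N.HasBinaryDegrees) (h : (u, v) ∈ N.arcs) : u ∈ N.verts :=
  (hN.1 _ h).1

lemma target_mem (hN : N.HasBinaryDegrees) (h : (u, v) ∈ N.arcs) : v ∈ N.verts :=
  (hN.1 _ h).2

lemma outDeg_eq_two (hN : N.HasBinaryDegrees) (hv : (u, v) ∈ N.arcs) (hw : (u, w) ∈ N.arcs)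
    (hvw : v ≠ w) : N.outDeg u = 2 := by
  have := two_le_outDeg hv hw hvw
  have := hN.2 u (hN.source_mem hv)
  omega

lemma isTreeVertex (hN : N.HasBinaryDegrees) (hu : (u, v) ∈ N.arcs) (hv : N.outDeg v = 2) :
    N.IsTreeVertex v := by
  have := one_le_inDeg_of_mem hu
  have := hN.2 v (hN.target_mem hu)
  exact ⟨hN.target_mem hu, by omega, hv⟩

lemma isTreeVertex_or_isLeaf (hN : N.HasBinaryDegrees) (hu : (u, v) ∈ N.arcs)
    (hv : ¬ N.IsRet v) : N.IsTreeVertex v ∨ N.IsLeaf v := by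
  have hvV := hN.target_mem hu
  have := one_le_inDeg_of_mem hu
  have := hN.2 v hvV
  simp only [IsRet, IsTreeVertex, IsLeaf, hvV, true_and] at hv ⊢
  omega

end HasBinaryDegrees

def IsSink (N : DNet) (x : ℕ) : Prop := x ∈ N.verts ∧ N.outDeg x = 0

def Siblings (N : DNet) (x y : ℕ) : Prop := ∃ q, (q, x) ∈ N.arcs ∧ (q, y) ∈ N.arcs

lemma Siblings.symm (h : N.Siblings x y) : N.Siblings y x :=
  let ⟨q, hx, hy⟩ := h
  ⟨q, hy, hx⟩

def HasRetParentOrSibling (N : DNet) (x : ℕ) : Prop :=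
  ∃ q, (q, x) ∈ N.arcs ∧ (N.IsRet q ∨ ∃ c, c ≠ x ∧ (q, c) ∈ N.arcs ∧ N.IsRet c)

def ClearLeaves (N : DNet) (S : Finset ℕ) : Prop :=
  (∀ x ∈ S, ¬ N.HasRetParentOrSibling x) ∧
    ∀ x ∈ S, ∀ y ∈ S, x ≠ y → ¬ N.Siblings x y

lemma treeChild_and_clearLeaves_of_arcs_eq_empty (h : N.arcs = ∅) (S : Finset ℕ) :
    N.TreeChild ∧ N.ClearLeaves S := by
  refine ⟨fun v _ hv => absurd (by simp [outDeg, h]) hv, fun x _ ⟨q, hq, _⟩ => ?_,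
    fun x _ y _ _ ⟨q, hq, _⟩ => ?_⟩ <;> simp [h] at hq

def AgreeAt (M N : DNet) (v : ℕ) : Prop :=
  (v ∈ M.verts ↔ v ∈ N.verts) ∧ M.inDeg v = N.inDeg v ∧ M.outDeg v = N.outDeg v

namespace AgreeAt

lemma isRet_iff (h : AgreeAt M N v) : M.IsRet v ↔ N.IsRet v := by
  simp only [IsRet, h.1, h.2.1, h.2.2]

lemma isLeaf_iff (h : AgreeAt M N v) : M.IsLeaf v ↔ N.IsLeaf v := by
  simp only [IsLeaf, h.1, h.2.1, h.2.2]

lemma isTreeVertex_iff (h : AgreeAt M N v) : M.IsTreeVertex v ↔ N.IsTreeVertex v := by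
  simp only [IsTreeVertex, h.1, h.2.1, h.2.2]

lemma isSink_iff (h : AgreeAt M N v) : M.IsSink v ↔ N.IsSink v := by
  simp only [IsSink, h.1, h.2.2]

end AgreeAt

/-- `M` arises from `N` by deleting the vertices of `D` with the arcs leaving them and
redirecting every arc `(u, d)`, `d ∈ D`, to `(u, σ d)`. Both kinds of cherry reduction
have this form. -/
structure Redirect (N M : DNet) (D : Finset ℕ) (σ : ℕ → ℕ) : Prop where
  verts_eq : M.verts = N.verts \ D
  map_of_notMem : ∀ w ∉ D, σ w = w
  mem_arcs_iff : ∀ u w, (u, w) ∈ M.arcs ↔ u ∉ D ∧ ∃ w', (u, w') ∈ N.arcs ∧ σ w' = w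

namespace Redirect

lemma mem_verts_iff (hR : Redirect N M D σ) (hv : v ∉ D) : v ∈ M.verts ↔ v ∈ N.verts := by
  simp [hR.verts_eq, hv]

lemma mem_arcs (hR : Redirect N M D σ) (h : (u, w) ∈ N.arcs) (hu : u ∉ D) (hw : w ∉ D) :
    (u, w) ∈ M.arcs :=
  (hR.mem_arcs_iff u w).2 ⟨hu, w, h, hR.map_of_notMem w hw⟩

lemma mem_arcs_of_mem (hR : Redirect N M D σ) (h : (u, w) ∈ M.arcs)
    (hu : ∀ d ∈ D, (u, d) ∉ N.arcs) : (u, w) ∈ N.arcs := by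
  obtain ⟨-, w', hw', rfl⟩ := (hR.mem_arcs_iff u w).1 h
  by_cases hw'D : w' ∈ D
  · exact absurd hw' (hu w' hw'D)
  · rwa [hR.map_of_notMem w' hw'D]

lemma outDeg_eq (hR : Redirect N M D σ) (hu : u ∉ D)
    (hinj : ∀ w w', (u, w) ∈ N.arcs → (u, w') ∈ N.arcs → σ w = σ w' → w = w') :
    M.outDeg u = N.outDeg u :=
  outDeg_eq_of_children_iff hinj fun w => by simp [hR.mem_arcs_iff, hu]

lemma inDeg_eq (hR : Redirect N M D σ) (hv : v ∉ D) (hσ : ∀ d ∈ D, σ d ≠ v)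
    (hpar : ∀ d ∈ D, (d, v) ∉ N.arcs) : M.inDeg v = N.inDeg v := by
  refine inDeg_eq_of_parents_iff fun u => ⟨fun h => ?_, fun h => ?_⟩
  · obtain ⟨-, w', hw', rfl⟩ := (hR.mem_arcs_iff u _).1 h
    by_cases hw'D : w' ∈ D
    · exact absurd rfl (hσ w' hw'D)
    · rwa [hR.map_of_notMem w' hw'D]
  · exact hR.mem_arcs h (fun hu => hpar u hu h) hv

lemma siblings (hR : Redirect N M D σ) (hx : x ∉ D) (hy : y ∉ D)
    (hpar : ∀ d ∈ D, (d, x) ∉ N.arcs) (h : N.Siblings x y) : M.Siblings x y := by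
  obtain ⟨q, hqx, hqy⟩ := h
  have hq : q ∉ D := fun hq => hpar q hq hqx
  exact ⟨q, hR.mem_arcs hqx hq hx, hR.mem_arcs hqy hq hy⟩

end Redirect

structure CherryReduction (N M : DNet) (a b p : ℕ) : Prop where
  ne : a ≠ b
  isLeaf_left : N.IsLeaf a
  isLeaf_right : N.IsLeaf b
  arc_left : (p, a) ∈ N.arcs
  arc_right : (p, b) ∈ N.arcs
  redirect : Redirect N M {a, p} (Function.update id p b)

namespace CherryReduction

lemma outDeg_parent (hN : N.HasBinaryDegrees) (hC : CherryReduction N M a b p) :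
    N.outDeg p = 2 :=
  hN.outDeg_eq_two hC.arc_left hC.arc_right hC.ne

lemma child_eq (hN : N.HasBinaryDegrees) (hC : CherryReduction N M a b p)
    (h : (p, w) ∈ N.arcs) : w = a ∨ w = b :=
  eq_or_eq_of_outDeg_eq_two (hC.outDeg_parent hN) hC.arc_left hC.arc_right hC.ne h

lemma parent_eq (hC : CherryReduction N M a b p) (h : (u, x) ∈ N.arcs) (hx : x = a ∨ x = b) :
    u = p := by
  rcases hx with rfl | rfl
  · exact eq_of_inDeg_eq_one hC.isLeaf_left.2.1 hC.arc_left h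
  · exact eq_of_inDeg_eq_one hC.isLeaf_right.2.1 hC.arc_right h

lemma ne_parent (hC : CherryReduction N M a b p) (hx : N.outDeg x = 0) : x ≠ p :=
  (ne_of_mem_arcs_of_outDeg_eq_zero hC.arc_left hx).symm

lemma map_injOn (hC : CherryReduction N M a b p) (hu : u ≠ p) :
    ∀ w w', (u, w) ∈ N.arcs → (u, w') ∈ N.arcs →
      Function.update id p b w = Function.update id p b w' → w = w' := by
  intro w w' hw hw' h
  have hub : (u, b) ∉ N.arcs := fun h' => hu (hC.parent_eq h' (.inr rfl))
  simp only [Function.update_apply, id] at h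
  split_ifs at h <;> subst_vars <;> first | rfl | contradiction

lemma agreeAt (hN : N.HasBinaryDegrees) (hC : CherryReduction N M a b p)
    (hva : v ≠ a) (hvb : v ≠ b) (hvp : v ≠ p) : AgreeAt M N v := by
  have hvD : v ∉ ({a, p} : Finset ℕ) := by simp [hva, hvp]
  refine ⟨hC.redirect.mem_verts_iff hvD, hC.redirect.inDeg_eq hvD ?_ ?_,
    hC.redirect.outDeg_eq hvD (hC.map_injOn hvp)⟩
  · simp [Function.update_apply, hC.ne_parent hC.isLeaf_left.2.2, Ne.symm hva, Ne.symm hvb]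
  · simp only [Finset.mem_insert, Finset.mem_singleton, forall_eq_or_imp, forall_eq]
    refine ⟨fun h => ?_, fun h => ?_⟩
    · exact ne_of_mem_arcs_of_outDeg_eq_zero h hC.isLeaf_left.2.2 rfl
    · rcases hC.child_eq hN h with rfl | rfl <;> contradiction

lemma mem_arcs_right_iff (hN : N.HasBinaryDegrees) (hC : CherryReduction N M a b p) :
    (u, b) ∈ M.arcs ↔ (u, p) ∈ N.arcs := by
  have hap := hC.ne_parent hC.isLeaf_left.2.2
  have hbp := hC.ne_parent hC.isLeaf_right.2.2
  rw [hC.redirect.mem_arcs_iff]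
  constructor
  · rintro ⟨hu, w', hw', hσ⟩
    simp only [Function.update_apply, id] at hσ
    split_ifs at hσ with hw'p
    · rwa [← hw'p]
    · subst hσ
      exact absurd (hC.parent_eq hw' (.inr rfl)) (by simp at hu; exact hu.2)
  · intro h
    refine ⟨?_, p, h, by simp⟩
    have hua : u ≠ a := ne_of_mem_arcs_of_outDeg_eq_zero h hC.isLeaf_left.2.2
    have hup : u ≠ p := by
      rintro rfl
      rcases hC.child_eq hN h with rfl | rfl <;> contradiction
    simp [hua, hup]

lemma hasBinaryDegrees (hN : N.HasBinaryDegrees) (hC : CherryReduction N M a b p) :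
    M.HasBinaryDegrees := by
  have hap := hC.ne_parent hC.isLeaf_left.2.2
  have hbp := hC.ne_parent hC.isLeaf_right.2.2
  have hbM : b ∈ M.verts := by
    simp [hC.redirect.verts_eq, hC.isLeaf_right.1, Ne.symm hC.ne, hbp]
  refine ⟨fun ⟨u, w⟩ h => ?_, fun v hv => ?_⟩
  · obtain ⟨hu, w', hw', rfl⟩ := (hC.redirect.mem_arcs_iff u _).1 h
    refine ⟨(hC.redirect.mem_verts_iff hu).2 (hN.source_mem hw'), ?_⟩
    by_cases hw'p : w' = p
    · simpa [hw'p] using hbM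
    · have hw'a : w' ≠ a := by
        rintro rfl
        simp [hC.parent_eq hw' (.inl rfl)] at hu
      simpa [hw'p, hC.redirect.verts_eq, hw'a] using hN.target_mem hw'
  · have hvN : v ∈ N.verts ∧ v ≠ a ∧ v ≠ p := by simpa [hC.redirect.verts_eq] using hv
    by_cases hvb : v = b
    · subst hvb
      have hin : M.inDeg v = N.inDeg p :=
        inDeg_eq_of_parents_iff fun u => hC.mem_arcs_right_iff hN
      have hout : M.outDeg v = N.outDeg v :=
        hC.redirect.outDeg_eq (by simp [hC.ne.symm, hbp]) (hC.map_injOn hbp)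
      have := hN.2 p (hN.source_mem hC.arc_left)
      have := hC.outDeg_parent hN
      have := hC.isLeaf_right.2.2
      omega
    · obtain ⟨-, hin, hout⟩ := hC.agreeAt hN hvN.2.1 hvb hvN.2.2
      rw [hin, hout]
      exact hN.2 v hvN.1

lemma treeChild (hN : N.HasBinaryDegrees) (hC : CherryReduction N M a b p)
    (hM : M.TreeChild) : N.TreeChild := by
  intro v hv hvout
  by_cases hvp : v = p
  · exact ⟨a, hvp ▸ hC.arc_left, .inr hC.isLeaf_left⟩
  by_cases hvp' : (v, p) ∈ N.arcs
  · exact ⟨p, hvp', .inl (hN.isTreeVertex hvp' (hC.outDeg_parent hN))⟩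
  have hva : v ≠ a := fun h => hvout (h ▸ hC.isLeaf_left.2.2)
  have hvb : v ≠ b := fun h => hvout (h ▸ hC.isLeaf_right.2.2)
  have hv' := hC.agreeAt hN hva hvb hvp
  obtain ⟨c, hcM, hc⟩ := hM v (hv'.1.2 hv) (hv'.2.2 ▸ hvout)
  have hcN : (v, c) ∈ N.arcs := hC.redirect.mem_arcs_of_mem hcM (by
    simp only [Finset.mem_insert, Finset.mem_singleton, forall_eq_or_imp, forall_eq]
    exact ⟨fun h => hvp (hC.parent_eq h (.inl rfl)), hvp'⟩)
  have hcM' : c ∈ M.verts := by rcases hc with h | h <;> exact h.1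
  have hcD : c ∈ N.verts ∧ c ≠ a ∧ c ≠ p := by simpa [hC.redirect.verts_eq] using hcM'
  have hcb : c ≠ b := fun h => hvp (hC.parent_eq hcN (.inr h))
  have hc' := hC.agreeAt hN hcD.2.1 hcb hcD.2.2
  exact ⟨c, hcN, hc.imp hc'.isTreeVertex_iff.1 hc'.isLeaf_iff.1⟩

lemma isSink (hN : N.HasBinaryDegrees) (hC : CherryReduction N M a b p) (hx : N.IsSink x)
    (hxa : x ≠ a) (hxb : x ≠ b) : M.IsSink x :=
  (hC.agreeAt hN hxa hxb (hC.ne_parent hx.2)).isSink_iff.2 hx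

lemma hasRetParentOrSibling (hN : N.HasBinaryDegrees) (hC : CherryReduction N M a b p)
    (hx : N.IsSink x) (hxa : x ≠ a) (hxb : x ≠ b) (h : N.HasRetParentOrSibling x) :
    M.HasRetParentOrSibling x := by
  obtain ⟨q, hqx, hret⟩ := h
  have hqp : q ≠ p := by
    rintro rfl
    rcases hC.child_eq hN hqx with rfl | rfl <;> contradiction
  have hqa := ne_of_mem_arcs_of_outDeg_eq_zero hqx hC.isLeaf_left.2.2
  have hqb := ne_of_mem_arcs_of_outDeg_eq_zero hqx hC.isLeaf_right.2.2
  have hq := hC.agreeAt hN hqa hqb hqp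
  have hqxM := hC.redirect.mem_arcs hqx (by simp [hqa, hqp])
    (by simp [hxa, hC.ne_parent hx.2])
  refine ⟨q, hqxM, hret.imp hq.isRet_iff.2 fun ⟨c, hcx, hqc, hc⟩ => ⟨c, hcx, ?_⟩⟩
  have hca : c ≠ a := fun h => hqp (hC.parent_eq hqc (.inl h))
  have hcb : c ≠ b := fun h => hqp (hC.parent_eq hqc (.inr h))
  have hcp : c ≠ p := by
    rintro rfl
    have := hC.outDeg_parent hN
    have := hc.2.2
    omega
  exact ⟨hC.redirect.mem_arcs hqc (by simp [hqa, hqp]) (by simp [hca, hcp]),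
    (hC.agreeAt hN hca hcb hcp).isRet_iff.2 hc⟩

lemma not_hasRetParentOrSibling (hN : N.HasBinaryDegrees) (hC : CherryReduction N M a b p)
    (hx : x = a ∨ x = b) : ¬ N.HasRetParentOrSibling x := by
  rintro ⟨q, hqx, hret⟩
  obtain rfl := hC.parent_eq hqx hx
  have := hC.outDeg_parent hN
  have hleaf : ∀ c, (q, c) ∈ N.arcs → N.outDeg c = 0 := fun c hc => by
    rcases hC.child_eq hN hc with rfl | rfl
    exacts [hC.isLeaf_left.2.2, hC.isLeaf_right.2.2]
  rcases hret with h | ⟨c, -, hqc, hc⟩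
  · exact absurd h.2.2 (by omega)
  · exact absurd hc.2.2 (by simp [hleaf c hqc])

lemma eq_of_siblings (hN : N.HasBinaryDegrees) (hC : CherryReduction N M a b p)
    (h : N.Siblings x y) (hx : x = a ∨ x = b) : y = a ∨ y = b :=
  let ⟨_, hqx, hqy⟩ := h
  hC.child_eq hN (hC.parent_eq hqx hx ▸ hqy)

lemma siblings (hN : N.HasBinaryDegrees) (hC : CherryReduction N M a b p) (hx : N.IsSink x)
    (hy : N.IsSink y) (hxa : x ≠ a) (hxb : x ≠ b) (hya : y ≠ a) (h : N.Siblings x y) :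
    M.Siblings x y := by
  refine hC.redirect.siblings (by simp [hxa, hC.ne_parent hx.2])
    (by simp [hya, hC.ne_parent hy.2]) ?_ h
  simp only [Finset.mem_insert, Finset.mem_singleton, forall_eq_or_imp, forall_eq]
  refine ⟨fun h => ?_, fun h => ?_⟩
  · exact ne_of_mem_arcs_of_outDeg_eq_zero h hC.isLeaf_left.2.2 rfl
  · rcases hC.child_eq hN h with rfl | rfl <;> contradiction

lemma treeChild_and_clearLeaves (hN : N.HasBinaryDegrees) (hC : CherryReduction N M a b p)
    (hS : ∀ x ∈ S, N.IsSink x) (hab : a ∈ S → b ∉ S)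
    (hM : M.TreeChild ∧ M.ClearLeaves ((S.erase a).erase b)) :
    N.TreeChild ∧ N.ClearLeaves S := by
  have hmem : ∀ x ∈ S, x ≠ a → x ≠ b → x ∈ (S.erase a).erase b :=
    fun x hx hxa hxb => by simp [hx, hxa, hxb]
  refine ⟨hC.treeChild hN hM.1, fun x hx hbad => ?_, fun x hx y hy hxy hsib => ?_⟩
  · by_cases hxab : x = a ∨ x = b
    · exact hC.not_hasRetParentOrSibling hN hxab hbad
    push Not at hxab
    exact hM.2.1 x (hmem x hx hxab.1 hxab.2) (hC.hasRetParentOrSibling hN (hS x hx) hxab.1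
      hxab.2 hbad)
  · have away : ∀ x ∈ S, ∀ y ∈ S, x ≠ y → N.Siblings x y → x ≠ a ∧ x ≠ b := by
      rintro x hx y hy hxy hsib
      rw [← not_or]
      intro hx'
      rcases hx' with rfl | rfl <;> rcases hC.eq_of_siblings hN hsib (by simp) with rfl | rfl
      exacts [hxy rfl, hab hx hy, hab hy hx, hxy rfl]
    obtain ⟨hxa, hxb⟩ := away x hx y hy hxy hsib
    obtain ⟨hya, hyb⟩ := away y hy x hx hxy.symm hsib.symm
    exact hM.2.2 x (hmem x hx hxa hxb) y (hmem y hy hya hyb) hxy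
      (hC.siblings hN (hS x hx) (hS y hy) hxa hxb hya hsib)

end CherryReduction

lemma _root_.RReduceCherry.exists_cherryReduction (hN : N.HasBinaryDegrees)
    (h : RReduceCherry N M a b) : ∃ p, N.CherryReduction M a b p := by
  obtain ⟨⟨hab, ha, hb, -⟩, p, hpa, hpb, hcase⟩ := h
  have hp2 := hN.outDeg_eq_two hpa hpb hab
  have hchild : ∀ w, (p, w) ∈ N.arcs → w = a ∨ w = b := fun w =>
    eq_or_eq_of_outDeg_eq_two hp2 hpa hpb hab
  have hpar_a : ∀ u, (u, a) ∈ N.arcs → u = p := fun u => eq_of_inDeg_eq_one ha.2.1 hpa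
  have hpar_b : ∀ u, (u, b) ∈ N.arcs → u = p := fun u => eq_of_inDeg_eq_one hb.2.1 hpb
  have hsink_a : ∀ w, (a, w) ∉ N.arcs := fun w h' =>
    ne_of_mem_arcs_of_outDeg_eq_zero h' ha.2.2 rfl
  have hsink_b : ∀ w, (b, w) ∉ N.arcs := fun w h' =>
    ne_of_mem_arcs_of_outDeg_eq_zero h' hb.2.2 rfl
  refine ⟨p, hab, ha, hb, hpa, hpb, ?_⟩
  rcases hcase with ⟨hp0, hMv, hMa⟩ | ⟨g, hgp, hMv, hMa⟩
  · have hpar_p : ∀ u, (u, p) ∉ N.arcs := fun u h' => by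
      have := one_le_inDeg_of_mem h'; omega
    refine ⟨hMv, fun w hw => by simp_all, fun u w => ?_⟩
    rw [hMa]
    simp only [Finset.mem_sdiff, Finset.mem_insert, Finset.mem_singleton, Prod.mk.injEq,
      Function.update_apply, id]
    grind
  · have hpar_p : ∀ u, (u, p) ∈ N.arcs → u = g := fun u => by
      have := one_le_inDeg_of_mem hgp
      have := hN.2 p (hN.source_mem hpa)
      exact eq_of_inDeg_eq_one (by omega) hgp
    refine ⟨hMv, fun w hw => by simp_all, fun u w => ?_⟩
    rw [hMa]
    simp only [Finset.mem_sdiff, Finset.mem_insert, Finset.mem_singleton, Prod.mk.injEq,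
      Function.update_apply, id]
    grind

structure RetCherryReduction (N M : DNet) (a b pa pb qa : ℕ) : Prop where
  ne : a ≠ b
  isLeaf_left : N.IsLeaf a
  isLeaf_right : N.IsLeaf b
  arc_left : (pa, a) ∈ N.arcs
  arc_right : (pb, b) ∈ N.arcs
  isRet : N.IsRet pa
  arc_ret : (pb, pa) ∈ N.arcs
  arc_other : (qa, pa) ∈ N.arcs
  other_ne : qa ≠ pb
  redirect : Redirect N M {pa, pb} (Function.update (Function.update id pa a) pb b)

namespace RetCherryReduction

lemma child_left_eq (hR : RetCherryReduction N M a b pa pb qa) (h : (pa, w) ∈ N.arcs) :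
    w = a :=
  eq_of_outDeg_eq_one hR.isRet.2.2 hR.arc_left h

lemma parent_left_eq (hR : RetCherryReduction N M a b pa pb qa) (h : (u, a) ∈ N.arcs) :
    u = pa :=
  eq_of_inDeg_eq_one hR.isLeaf_left.2.1 hR.arc_left h

lemma parent_right_eq (hR : RetCherryReduction N M a b pa pb qa) (h : (u, b) ∈ N.arcs) :
    u = pb :=
  eq_of_inDeg_eq_one hR.isLeaf_right.2.1 hR.arc_right h

lemma ne_ret (hR : RetCherryReduction N M a b pa pb qa) (hx : N.outDeg x = 0) : x ≠ pa :=
  (ne_of_mem_arcs_of_outDeg_eq_zero hR.arc_left hx).symm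

lemma ne_right_parent (hR : RetCherryReduction N M a b pa pb qa) (hx : N.outDeg x = 0) :
    x ≠ pb :=
  (ne_of_mem_arcs_of_outDeg_eq_zero hR.arc_right hx).symm

lemma notMem_of_outDeg_eq_zero (hR : RetCherryReduction N M a b pa pb qa)
    (hx : N.outDeg x = 0) : x ∉ ({pa, pb} : Finset ℕ) := by
  simp [hR.ne_ret hx, hR.ne_right_parent hx]

lemma outDeg_right_parent (hN : N.HasBinaryDegrees)
    (hR : RetCherryReduction N M a b pa pb qa) : N.outDeg pb = 2 :=
  hN.outDeg_eq_two hR.arc_ret hR.arc_right (hR.ne_ret hR.isLeaf_right.2.2).symm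

lemma child_right_eq (hN : N.HasBinaryDegrees) (hR : RetCherryReduction N M a b pa pb qa)
    (h : (pb, w) ∈ N.arcs) : w = pa ∨ w = b :=
  eq_or_eq_of_outDeg_eq_two (hR.outDeg_right_parent hN) hR.arc_ret hR.arc_right
    (hR.ne_ret hR.isLeaf_right.2.2).symm h

lemma parent_ret_eq (hR : RetCherryReduction N M a b pa pb qa) (h : (u, pa) ∈ N.arcs) :
    u = qa ∨ u = pb :=
  eq_or_eq_of_inDeg_eq_two hR.isRet.2.1 hR.arc_other hR.arc_ret hR.other_ne h

lemma ret_ne_right_parent (hR : RetCherryReduction N M a b pa pb qa) : pa ≠ pb := by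
  intro h
  have := hR.child_left_eq (h ▸ hR.arc_right)
  exact hR.ne this.symm

lemma other_ne_ret (hR : RetCherryReduction N M a b pa pb qa) : qa ≠ pa := by
  rintro rfl
  exact hR.ne_ret hR.isLeaf_left.2.2 (hR.child_left_eq hR.arc_other).symm

lemma outDeg_eq (hR : RetCherryReduction N M a b pa pb qa)
    (hu : u ∉ ({pa, pb} : Finset ℕ)) : M.outDeg u = N.outDeg u := by
  refine hR.redirect.outDeg_eq hu fun w w' hw hw' h => ?_
  simp only [Finset.mem_insert, Finset.mem_singleton, not_or] at hu
  have hua' : (u, a) ∉ N.arcs := fun h' => hu.1 (hR.parent_left_eq h')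
  have hub' : (u, b) ∉ N.arcs := fun h' => hu.2 (hR.parent_right_eq h')
  have := hR.ne
  simp only [Function.update_apply, id] at h
  split_ifs at h <;> subst_vars <;> first | rfl | contradiction

lemma agreeAt (hN : N.HasBinaryDegrees) (hR : RetCherryReduction N M a b pa pb qa)
    (hva : v ≠ a) (hvb : v ≠ b) (hvpa : v ≠ pa) (hvpb : v ≠ pb) : AgreeAt M N v := by
  have hvD : v ∉ ({pa, pb} : Finset ℕ) := by simp [hvpa, hvpb]
  refine ⟨hR.redirect.mem_verts_iff hvD, hR.redirect.inDeg_eq hvD ?_ ?_,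
    hR.outDeg_eq hvD⟩
  · simp [Function.update_apply, hR.ret_ne_right_parent, Ne.symm hva, Ne.symm hvb]
  · simp only [Finset.mem_insert, Finset.mem_singleton, forall_eq_or_imp, forall_eq]
    exact ⟨fun h => hva (hR.child_left_eq h),
      fun h => (hR.child_right_eq hN h).elim hvpa hvb⟩

lemma mem_arcs_left_iff (hR : RetCherryReduction N M a b pa pb qa) :
    (u, a) ∈ M.arcs ↔ u = qa := by
  have := hR.ret_ne_right_parent
  have := hR.ne
  have := hR.other_ne
  have := hR.other_ne_ret
  have := @hR.parent_left_eq
  have := @hR.parent_ret_eq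
  rw [hR.redirect.mem_arcs_iff]
  simp only [Finset.mem_insert, Finset.mem_singleton, Function.update_apply, id]
  grind [hR.arc_other]

lemma mem_arcs_right_iff (hN : N.HasBinaryDegrees)
    (hR : RetCherryReduction N M a b pa pb qa) : (u, b) ∈ M.arcs ↔ (u, pb) ∈ N.arcs := by
  have := hR.ret_ne_right_parent
  have := hR.ne
  have := hR.ne_ret hR.isLeaf_left.2.2
  have := (hR.ne_ret hR.isLeaf_right.2.2).symm
  have := hR.ne_right_parent hR.isLeaf_left.2.2
  have := (hR.ne_right_parent hR.isLeaf_right.2.2).symm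
  have := @hR.parent_right_eq
  have : ∀ w, (pa, w) ∈ N.arcs → w = a := fun w h => hR.child_left_eq h
  have : ∀ w, (pb, w) ∈ N.arcs → w = pa ∨ w = b := fun w h => hR.child_right_eq hN h
  rw [hR.redirect.mem_arcs_iff]
  simp only [Finset.mem_insert, Finset.mem_singleton, Function.update_apply, id]
  grind

lemma isSink_left (hR : RetCherryReduction N M a b pa pb qa) : M.IsSink a := by
  have ha := hR.notMem_of_outDeg_eq_zero hR.isLeaf_left.2.2
  exact ⟨(hR.redirect.mem_verts_iff ha).2 hR.isLeaf_left.1,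
    (hR.outDeg_eq ha).trans hR.isLeaf_left.2.2⟩

lemma hasBinaryDegrees (hN : N.HasBinaryDegrees)
    (hR : RetCherryReduction N M a b pa pb qa) : M.HasBinaryDegrees := by
  have haM := hR.isSink_left.1
  have hbM : b ∈ M.verts := (hR.redirect.mem_verts_iff
    (hR.notMem_of_outDeg_eq_zero hR.isLeaf_right.2.2)).2 hR.isLeaf_right.1
  have hpapb := hR.ret_ne_right_parent
  refine ⟨fun ⟨u, w⟩ h => ?_, fun v hv => ?_⟩
  · obtain ⟨hu, w', hw', rfl⟩ := (hR.redirect.mem_arcs_iff u _).1 h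
    refine ⟨(hR.redirect.mem_verts_iff hu).2 (hN.source_mem hw'), ?_⟩
    by_cases hw'D : w' ∈ ({pa, pb} : Finset ℕ)
    · simp only [Finset.mem_insert, Finset.mem_singleton] at hw'D
      rcases hw'D with rfl | rfl <;> simpa [Function.update_apply, hpapb]
    · rw [hR.redirect.map_of_notMem w' hw'D]
      exact (hR.redirect.mem_verts_iff hw'D).2 (hN.target_mem hw')
  · have hvD : v ∉ ({pa, pb} : Finset ℕ) := by simp_all [hR.redirect.verts_eq]
    have hvN : v ∈ N.verts := (hR.redirect.mem_verts_iff hvD).1 hv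
    have hout := hR.outDeg_eq hvD
    by_cases hva : v = a
    · subst hva
      have := inDeg_eq_one_of_parents_iff fun u => hR.mem_arcs_left_iff (u := u)
      have := hR.isLeaf_left.2.2
      omega
    by_cases hvb : v = b
    · subst hvb
      have : M.inDeg v = N.inDeg pb :=
        inDeg_eq_of_parents_iff fun u => hR.mem_arcs_right_iff hN
      have := hN.2 pb (hN.source_mem hR.arc_right)
      have := hR.outDeg_right_parent hN
      have := hR.isLeaf_right.2.2
      omega
    simp only [Finset.mem_insert, Finset.mem_singleton, not_or] at hvD
    obtain ⟨-, hin, hout⟩ := hR.agreeAt hN hva hvb hvD.1 hvD.2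
    rw [hin, hout]
    exact hN.2 v hvN

lemma exists_child_of_other_parent (hN : N.HasBinaryDegrees)
    (hR : RetCherryReduction N M a b pa pb qa) (ha : ¬ M.HasRetParentOrSibling a)
    (hqapb : (qa, pb) ∉ N.arcs) :
    ∃ c, (qa, c) ∈ N.arcs ∧ (N.IsTreeVertex c ∨ N.IsLeaf c) := by
  have hqapa := hR.other_ne_ret
  have hqaD : qa ∉ ({pa, pb} : Finset ℕ) := by simp [hqapa, hR.other_ne]
  have hqa := hR.agreeAt hN (ne_of_mem_arcs_of_outDeg_eq_zero hR.arc_other hR.isLeaf_left.2.2)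
    (ne_of_mem_arcs_of_outDeg_eq_zero hR.arc_other hR.isLeaf_right.2.2) hqapa hR.other_ne
  have hqaaM : (qa, a) ∈ M.arcs := hR.mem_arcs_left_iff.2 rfl
  have hout : N.outDeg qa = 2 := by
    have hnot : ¬ N.IsRet qa := fun h => ha ⟨qa, hqaaM, .inl (hqa.isRet_iff.2 h)⟩
    have hqaN := hN.source_mem hR.arc_other
    have := hN.2 qa hqaN
    have := one_le_outDeg_of_mem hR.arc_other
    simp only [IsRet, hqaN, true_and] at hnot
    omega
  obtain ⟨c, hcpa, hc⟩ := exists_ne_of_outDeg_eq_two hout pa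
  have hcpb : c ≠ pb := fun h => hqapb (h ▸ hc)
  have hca : c ≠ a := fun h => hqapa (hR.parent_left_eq (h ▸ hc))
  have hcb : c ≠ b := fun h => hR.other_ne (hR.parent_right_eq (h ▸ hc))
  have hcM := hR.redirect.mem_arcs hc hqaD (by simp [hcpa, hcpb])
  have hc' := hR.agreeAt hN hca hcb hcpa hcpb
  refine ⟨c, hc, ?_⟩
  have := (hR.hasBinaryDegrees hN).isTreeVertex_or_isLeaf hcM
    fun h => ha ⟨qa, hqaaM, .inr ⟨c, hca, hcM, h⟩⟩
  exact this.imp hc'.isTreeVertex_iff.1 hc'.isLeaf_iff.1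

lemma treeChild (hN : N.HasBinaryDegrees) (hR : RetCherryReduction N M a b pa pb qa)
    (hM : M.TreeChild) (ha : ¬ M.HasRetParentOrSibling a) : N.TreeChild := by
  intro v hv hvout
  by_cases hvpa : v = pa
  · exact ⟨a, hvpa ▸ hR.arc_left, .inr hR.isLeaf_left⟩
  by_cases hvpb : v = pb
  · exact ⟨b, hvpb ▸ hR.arc_right, .inr hR.isLeaf_right⟩
  by_cases hvpb' : (v, pb) ∈ N.arcs
  · exact ⟨pb, hvpb', .inl (hN.isTreeVertex hvpb' (hR.outDeg_right_parent hN))⟩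
  by_cases hvqa : v = qa
  · exact hvqa ▸ hR.exists_child_of_other_parent hN ha (hvqa ▸ hvpb')
  have hva : v ≠ a := fun h => hvout (h ▸ hR.isLeaf_left.2.2)
  have hvb : v ≠ b := fun h => hvout (h ▸ hR.isLeaf_right.2.2)
  have hv' := hR.agreeAt hN hva hvb hvpa hvpb
  obtain ⟨c, hcM, hc⟩ := hM v (hv'.1.2 hv) (hv'.2.2 ▸ hvout)
  have hcN : (v, c) ∈ N.arcs := hR.redirect.mem_arcs_of_mem hcM (by
    simp only [Finset.mem_insert, Finset.mem_singleton, forall_eq_or_imp, forall_eq]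
    exact ⟨fun h => (hR.parent_ret_eq h).elim hvqa hvpb, hvpb'⟩)
  have hc' := hR.agreeAt hN (fun h => hvpa (hR.parent_left_eq (h ▸ hcN)))
    (fun h => hvpb (hR.parent_right_eq (h ▸ hcN)))
    (fun h => (hR.parent_ret_eq (h ▸ hcN)).elim hvqa hvpb) (fun h => hvpb' (h ▸ hcN))
  exact ⟨c, hcN, hc.imp hc'.isTreeVertex_iff.1 hc'.isLeaf_iff.1⟩

lemma isSink (hN : N.HasBinaryDegrees) (hR : RetCherryReduction N M a b pa pb qa)
    (hx : N.IsSink x) (hxa : x ≠ a) (hxb : x ≠ b) : M.IsSink x :=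
  (hR.agreeAt hN hxa hxb (hR.ne_ret hx.2) (hR.ne_right_parent hx.2)).isSink_iff.2 hx

lemma hasRetParentOrSibling (hN : N.HasBinaryDegrees)
    (hR : RetCherryReduction N M a b pa pb qa) (hx : N.IsSink x) (hxa : x ≠ a) (hxb : x ≠ b)
    (h : N.HasRetParentOrSibling x) :
    M.HasRetParentOrSibling x ∨ M.Siblings x a := by
  obtain ⟨q, hqx, hret⟩ := h
  have hqpa : q ≠ pa := fun h => hxa (hR.child_left_eq (h ▸ hqx))
  have hqpb : q ≠ pb := fun h => (hR.child_right_eq hN (h ▸ hqx)).elim (hR.ne_ret hx.2) hxb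
  have hqD : q ∉ ({pa, pb} : Finset ℕ) := by simp [hqpa, hqpb]
  have hq := hR.agreeAt hN (ne_of_mem_arcs_of_outDeg_eq_zero hqx hR.isLeaf_left.2.2)
    (ne_of_mem_arcs_of_outDeg_eq_zero hqx hR.isLeaf_right.2.2) hqpa hqpb
  have hqxM := hR.redirect.mem_arcs hqx hqD (hR.notMem_of_outDeg_eq_zero hx.2)
  rcases hret with hret | ⟨c, hcx, hqc, hc⟩
  · exact .inl ⟨q, hqxM, .inl (hq.isRet_iff.2 hret)⟩
  by_cases hcpa : c = pa
  · subst hcpa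
    have hqqa := (hR.parent_ret_eq hqc).resolve_right hqpb
    exact .inr ⟨q, hqxM, hR.mem_arcs_left_iff.2 hqqa⟩
  have hcpb : c ≠ pb := by
    rintro rfl
    have := hR.outDeg_right_parent hN
    have := hc.2.2
    omega
  have hc' := hR.agreeAt hN (fun h => hqpa (hR.parent_left_eq (h ▸ hqc)))
    (fun h => hqpb (hR.parent_right_eq (h ▸ hqc))) hcpa hcpb
  exact .inl ⟨q, hqxM, .inr ⟨c, hcx, hR.redirect.mem_arcs hqc hqD (by simp [hcpa, hcpb]),
    hc'.isRet_iff.2 hc⟩⟩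

lemma siblings (hN : N.HasBinaryDegrees) (hR : RetCherryReduction N M a b pa pb qa)
    (hx : N.IsSink x) (hy : N.IsSink y) (hxa : x ≠ a) (hxb : x ≠ b) (h : N.Siblings x y) :
    M.Siblings x y := by
  refine hR.redirect.siblings (hR.notMem_of_outDeg_eq_zero hx.2)
    (hR.notMem_of_outDeg_eq_zero hy.2) ?_ h
  simp only [Finset.mem_insert, Finset.mem_singleton, forall_eq_or_imp, forall_eq]
  exact ⟨fun h => hxa (hR.child_left_eq h),
    fun h => (hR.child_right_eq hN h).elim (hR.ne_ret hx.2) hxb⟩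

lemma treeChild_and_clearLeaves (hN : N.HasBinaryDegrees)
    (hR : RetCherryReduction N M a b pa pb qa) (hS : ∀ x ∈ S, N.IsSink x) (haS : a ∉ S)
    (hbS : b ∉ S) (hM : M.TreeChild ∧ M.ClearLeaves (insert a S)) :
    N.TreeChild ∧ N.ClearLeaves S := by
  have hne : ∀ x ∈ S, x ≠ a ∧ x ≠ b := fun x hx =>
    ⟨by rintro rfl; exact haS hx, by rintro rfl; exact hbS hx⟩
  refine ⟨hR.treeChild hN hM.1 (hM.2.1 a (Finset.mem_insert_self a S)), fun x hx hbad => ?_,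
    fun x hx y hy hxy hsib => ?_⟩
  · rcases hR.hasRetParentOrSibling hN (hS x hx) (hne x hx).1 (hne x hx).2 hbad with h | h
    · exact hM.2.1 x (Finset.mem_insert_of_mem hx) h
    · exact hM.2.2 x (Finset.mem_insert_of_mem hx) a (Finset.mem_insert_self a S)
        (hne x hx).1 h
  · exact hM.2.2 x (Finset.mem_insert_of_mem hx) y (Finset.mem_insert_of_mem hy) hxy
      (hR.siblings hN (hS x hx) (hS y hy) (hne x hx).1 (hne x hx).2 hsib)

end RetCherryReduction

lemma _root_.RReduceRetCherry.exists_retCherryReduction (hN : N.HasBinaryDegrees)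
    (h : RReduceRetCherry N M a b) : ∃ pa pb qa, N.RetCherryReduction M a b pa pb qa := by
  obtain ⟨⟨hab, ha, hb, -⟩, pa, pb, qa, qb, hpaa, hpbb, hret, hpbpa, hqapa, hqapb, hqbpb,
    hMv, hMa⟩ := h
  have hpab : pa ≠ b := ne_of_mem_arcs_of_outDeg_eq_zero hpaa hb.2.2
  have hpb2 := hN.outDeg_eq_two hpbpa hpbb hpab
  have : ∀ w, (pa, w) ∈ N.arcs → w = a := fun w => eq_of_outDeg_eq_one hret.2.2 hpaa
  have : ∀ w, (pb, w) ∈ N.arcs → w = pa ∨ w = b := fun w =>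
    eq_or_eq_of_outDeg_eq_two hpb2 hpbpa hpbb hpab
  have : ∀ u, (u, a) ∈ N.arcs → u = pa := fun u => eq_of_inDeg_eq_one ha.2.1 hpaa
  have : ∀ u, (u, b) ∈ N.arcs → u = pb := fun u => eq_of_inDeg_eq_one hb.2.1 hpbb
  have : ∀ u, (u, pa) ∈ N.arcs → u = qa ∨ u = pb := fun u =>
    eq_or_eq_of_inDeg_eq_two hret.2.1 hqapa hpbpa hqapb
  have : ∀ u, (u, pb) ∈ N.arcs → u = qb := fun u => by
    have := one_le_inDeg_of_mem hqbpb
    have := hN.2 pb (hN.source_mem hpbb)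
    exact eq_of_inDeg_eq_one (by omega) hqbpb
  have : pa ≠ a := ne_of_mem_arcs_of_outDeg_eq_zero hpaa ha.2.2
  have : pb ≠ a := ne_of_mem_arcs_of_outDeg_eq_zero hpbb ha.2.2
  have : pb ≠ b := ne_of_mem_arcs_of_outDeg_eq_zero hpbb hb.2.2
  refine ⟨pa, pb, qa, hab, ha, hb, hpaa, hpbb, hret, hpbpa, hqapa, hqapb, hMv,
    fun w hw => by simp_all, fun u w => ?_⟩
  rw [hMa]
  simp only [Finset.mem_sdiff, Finset.mem_insert, Finset.mem_singleton, Prod.mk.injEq,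
    Function.update_apply, id]
  grind

end DNet

section PickSequences

variable {rs : ℕ → Pick} {S : Finset ℕ} {k i j x a b : ℕ}

def IsFirstOccurrence (rs : ℕ → Pick) (k x j : ℕ) : Prop :=
  j < k ∧ (rs j).Contains x ∧ ∀ l < j, ¬ (rs l).Contains x

def FirstPicksSafe (rs : ℕ → Pick) (k : ℕ) (S : Finset ℕ) : Prop :=
  ∀ x ∈ S, ∀ j, IsFirstOccurrence rs k x j →
    (rs j).IsCherryPair ∧ (∀ y ∈ S, y ≠ x → ¬ IsFirstOccurrence rs k y j) ∧
      ∀ i, (rs i).IsRetPair → ¬ SuccAt rs k i j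

lemma SuccAt.of_tail (h : SuccAt (fun n => rs (n + 1)) k i j) :
    SuccAt rs (k + 1) (i + 1) (j + 1) := by
  obtain ⟨hij, hjk, hc, hmin⟩ := h
  refine ⟨by omega, by omega, hc, fun l hl hlj => ?_⟩
  obtain ⟨l, rfl⟩ : ∃ l', l = l' + 1 := ⟨l - 1, by omega⟩
  exact hmin l (by omega) (by omega)

lemma TreeChildSeq.tail (h : TreeChildSeq rs (k + 1)) : TreeChildSeq (fun n => rs (n + 1)) k :=
  ⟨fun i j hi hs => h.1 (i + 1) (j + 1) hi hs.of_tail,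
    fun i i' j hne hi hi' hs hs' => h.2 (i + 1) (i' + 1) (j + 1) (by omega) hi hi' hs.of_tail
      hs'.of_tail⟩

lemma isFirstOccurrence_zero (h : (rs 0).Contains x) : IsFirstOccurrence rs (k + 1) x 0 :=
  ⟨k.succ_pos, h, fun _ hl => absurd hl (Nat.not_lt_zero _)⟩

lemma IsFirstOccurrence.of_tail (hx : ¬ (rs 0).Contains x)
    (h : IsFirstOccurrence (fun n => rs (n + 1)) k x j) :
    IsFirstOccurrence rs (k + 1) x (j + 1) := by
  refine ⟨by have := h.1; omega, h.2.1, fun l hl => ?_⟩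
  rcases l with _ | l
  · exact hx
  · exact h.2.2 l (by omega)

lemma IsFirstOccurrence.succAt_zero (hx : (rs 0).fst = x)
    (h : IsFirstOccurrence (fun n => rs (n + 1)) k x j) : SuccAt rs (k + 1) 0 (j + 1) := by
  subst hx
  refine ⟨j.succ_pos, by have := h.1; omega, h.2.1, fun l hl hlj => ?_⟩
  obtain ⟨l, rfl⟩ : ∃ l', l = l' + 1 := ⟨l - 1, by omega⟩
  exact h.2.2 l (by omega)

namespace FirstPicksSafe

lemma tail_of_cherry (h : FirstPicksSafe rs (k + 1) S) (h0 : rs 0 = .cherry a b) :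
    FirstPicksSafe (fun n => rs (n + 1)) k ((S.erase a).erase b) := by
  have hfresh : ∀ x ∈ (S.erase a).erase b, x ∈ S ∧ ¬ (rs 0).Contains x := fun x hx => by
    simp only [Finset.mem_erase] at hx
    simp only [h0, Pick.Contains, Pick.fst, Pick.snd]
    exact ⟨hx.2.2, by omega⟩
  intro x hx j hj
  obtain ⟨hxS, hx0⟩ := hfresh x hx
  obtain ⟨hcherry, hfirst, hsucc⟩ := h x hxS (j + 1) (hj.of_tail hx0)
  refine ⟨hcherry, fun y hy hyx hyj => ?_, fun i hi hij => hsucc (i + 1) hi hij.of_tail⟩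
  obtain ⟨hyS, hy0⟩ := hfresh y hy
  exact hfirst y hyS hyx (hyj.of_tail hy0)

lemma not_both_of_cherry (h : FirstPicksSafe rs (k + 1) S) (h0 : rs 0 = .cherry a b)
    (hab : a ≠ b) (ha : a ∈ S) : b ∉ S := fun hb =>
  (h a ha 0 (isFirstOccurrence_zero (by simp [h0, Pick.Contains, Pick.fst]))).2.1 b hb hab.symm
    (isFirstOccurrence_zero (by simp [h0, Pick.Contains, Pick.snd]))

lemma notMem_of_ret (h : FirstPicksSafe rs (k + 1) S) (h0 : rs 0 = .ret a b)
    (hx : x = a ∨ x = b) : x ∉ S := fun hxS => by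
  have := (h x hxS 0 (isFirstOccurrence_zero (by
    rcases hx with rfl | rfl <;> simp [h0, Pick.Contains, Pick.fst, Pick.snd]))).1
  simp [h0, Pick.IsCherryPair] at this

lemma tail_of_ret (htc : TreeChildSeq rs (k + 1)) (h : FirstPicksSafe rs (k + 1) S)
    (h0 : rs 0 = .ret a b) : FirstPicksSafe (fun n => rs (n + 1)) k (insert a S) := by
  have hret : (rs 0).IsRetPair := by simp [h0, Pick.IsRetPair]
  have hfst : (rs 0).fst = a := by simp [h0, Pick.fst]
  have hfresh : ∀ x ∈ S, ¬ (rs 0).Contains x := fun x hx hx0 => by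
    refine h.notMem_of_ret h0 ?_ hx
    simp only [h0, Pick.Contains, Pick.fst, Pick.snd] at hx0
    omega
  have not_shared : ∀ x ∈ S, ∀ j, IsFirstOccurrence (fun n => rs (n + 1)) k x j →
      IsFirstOccurrence (fun n => rs (n + 1)) k a j → False := fun x hx j hxj haj =>
    (h x hx (j + 1) (hxj.of_tail (hfresh x hx))).2.2 0 hret (haj.succAt_zero hfst)
  intro x hx j hj
  rcases Finset.mem_insert.1 hx with rfl | hxS
  · refine ⟨htc.1 0 (j + 1) hret (hj.succAt_zero hfst), fun y hy hyx hyj => ?_,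
      fun i hi hij => htc.2 0 (i + 1) (j + 1) (by omega) hret hi (hj.succAt_zero hfst)
        hij.of_tail⟩
    exact not_shared y ((Finset.mem_insert.1 hy).resolve_left hyx) j hyj hj
  · obtain ⟨hcherry, hfirst, hsucc⟩ := h x hxS (j + 1) (hj.of_tail (hfresh x hxS))
    refine ⟨hcherry, fun y hy hyx hyj => ?_, fun i hi hij => hsucc (i + 1) hi hij.of_tail⟩
    rcases Finset.mem_insert.1 hy with rfl | hyS
    · exact not_shared x hxS j hj hyj
    · exact hfirst y hyS hyx (hyj.of_tail (hfresh y hyS))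

end FirstPicksSafe

end PickSequences

lemma RCherrySeq.tail {Ns : ℕ → DNet} {rs : ℕ → Pick} {k : ℕ}
    (h : RCherrySeq Ns rs (k + 1)) :
    RCherrySeq (fun n => Ns (n + 1)) (fun n => rs (n + 1)) k :=
  fun i hi => h (i + 1) (by omega)

theorem treeChild_and_clearLeaves_of_treeChildSeq (k : ℕ) (Ns : ℕ → DNet) (rs : ℕ → Pick)
    (S : Finset ℕ) (hN : (Ns 0).HasBinaryDegrees) (hseq : RCherrySeq Ns rs k)
    (hcomp : (Ns k).SingleVertex) (htc : TreeChildSeq rs k) (hS : ∀ x ∈ S, (Ns 0).IsSink x)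
    (hsafe : FirstPicksSafe rs k S) : (Ns 0).TreeChild ∧ (Ns 0).ClearLeaves S := by
  induction k generalizing Ns rs S with
  | zero => exact DNet.treeChild_and_clearLeaves_of_arcs_eq_empty hcomp.2 S
  | succ k ih =>
    have hstep := hseq 0 k.succ_pos
    cases h0 : rs 0 with
    | cherry a b =>
      obtain ⟨p, hC⟩ :=
        RReduceCherry.exists_cherryReduction hN (by simpa [RStep, h0] using hstep)
      refine hC.treeChild_and_clearLeaves hN hS (hsafe.not_both_of_cherry h0 hC.ne)
        (ih _ _ _ (hC.hasBinaryDegrees hN) hseq.tail hcomp htc.tail (fun x hx => ?_)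
          (hsafe.tail_of_cherry h0))
      simp only [Finset.mem_erase] at hx
      exact hC.isSink hN (hS x hx.2.2) hx.2.1 hx.1
    | ret a b =>
      obtain ⟨pa, pb, qa, hR⟩ :=
        RReduceRetCherry.exists_retCherryReduction hN (by simpa [RStep, h0] using hstep)
      have hab : a ∉ S ∧ b ∉ S :=
        ⟨hsafe.notMem_of_ret h0 (.inl rfl), hsafe.notMem_of_ret h0 (.inr rfl)⟩
      refine hR.treeChild_and_clearLeaves hN hS hab.1 hab.2
        (ih _ _ _ (hR.hasBinaryDegrees hN) hseq.tail hcomp htc.tail (fun x hx => ?_)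
          (hsafe.tail_of_ret htc h0))
      rcases Finset.mem_insert.1 hx with rfl | hxS
      · exact hR.isSink_left
      · exact hR.isSink hN (hS x hxS) (by rintro rfl; exact hab.1 hxS)
          (by rintro rfl; exact hab.2 hxS)

/-- Lemma 1: If there is a tree-child cherry-picking sequence associated
with a complete cherry-reduction sequence for the rooted binary phylogenetic network
`Ns 0`, then `Ns 0` is tree-child. -/
theorem treeChild_of_treeChild_sequence (X : Finset ℕ) (Ns : ℕ → DNet) (rs : ℕ → Pick)
    (k : ℕ) (hR : IsRootedBinaryNet (Ns 0) X) (hseq : RCherrySeq Ns rs k)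
    (hcomp : (Ns k).SingleVertex) (htc : TreeChildSeq rs k) :
    (Ns 0).TreeChild :=
  (treeChild_and_clearLeaves_of_treeChildSeq k Ns rs ∅
    (DNet.hasBinaryDegrees_of_isRootedBinaryNet hR) hseq hcomp htc (by simp)
    (by simp [FirstPicksSafe])).1
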